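/- Let C_cap = {x ∈ ℝ³ : ‖x‖ = 1, xᵀ e_z ≥ c_z} with c_z = cos(θ_max) ∈ (0,1]. For a nonzero vector g ∈ ℝ³ with unit normalization ĝ = g/‖g‖, the maximizer of ⟨g, x⟩ over x ∈ C_cap is: ĝ itself if ĝᵀ e_z ≥ c_z; otherwise, if the horizontal component v = (ĝ − (ĝᵀe_z) e_z)/‖ĝ − (ĝᵀe_z) e_z‖ is well-defined, the boundary point √(1−c_z²)·v + c_z·e_z. -/

import Mathlib

open scoped RealInnerProductSpace

/-!
Split a unit vector into its height `⟪x, e⟫` along the axis `e` and its horizontal part, whose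
norm is `√(1 - ⟪x, e⟫²)`. Cauchy–Schwarz on the horizontal parts bounds `⟪u, x⟫` by
`a t + √(1 - a²) √(1 - t²) = cos (arccos a - arccos t)` for heights `a`, `t`, with equality when
the horizontal parts are aligned. If `a ≤ c ≤ t`, the polar angle of `u` exceeds that of `x` by
at least `arccos a - arccos c`, which is attained on the boundary circle `t = c` above `u`.
-/

open Real

theorem mul_add_sqrt_mul_sqrt_eq_cos_arccos_sub {x y : ℝ} (hx₁ : -1 ≤ x) (hx₂ : x ≤ 1)
    (hy₁ : -1 ≤ y) (hy₂ : y ≤ 1) :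
    x * y + √(1 - x ^ 2) * √(1 - y ^ 2) = cos (arccos x - arccos y) := by
  rw [cos_sub, cos_arccos hx₁ hx₂, cos_arccos hy₁ hy₂, sin_arccos, sin_arccos]

theorem mul_add_sqrt_mul_sqrt_le {a c t : ℝ} (ha : -1 ≤ a) (hac : a ≤ c) (hct : c ≤ t)
    (ht : t ≤ 1) :
    a * t + √(1 - a ^ 2) * √(1 - t ^ 2) ≤ a * c + √(1 - a ^ 2) * √(1 - c ^ 2) := by
  rw [mul_add_sqrt_mul_sqrt_eq_cos_arccos_sub ha (by linarith) (by linarith) ht,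
    mul_add_sqrt_mul_sqrt_eq_cos_arccos_sub ha (by linarith) (by linarith) (by linarith)]
  have hca := arccos_le_arccos hac
  have htc := arccos_le_arccos hct
  exact cos_le_cos_of_nonneg_of_le_pi (by linarith) (by linarith [arccos_le_pi a, arccos_nonneg t])
    (by linarith)

section

variable {E : Type*} [NormedAddCommGroup E] [InnerProductSpace ℝ E] {e : E}

theorem inner_sub_inner_smul_self (he : ‖e‖ = 1) (x y : E) :
    ⟪x - ⟪x, e⟫ • e, y - ⟪y, e⟫ • e⟫ = ⟪x, y⟫ - ⟪x, e⟫ * ⟪y, e⟫ := by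
  simp only [inner_sub_left, inner_sub_right, real_inner_smul_left, real_inner_smul_right,
    real_inner_self_eq_norm_sq, he, real_inner_comm e]
  ring

theorem norm_sub_inner_smul_self (he : ‖e‖ = 1) {x : E} (hx : ‖x‖ = 1) :
    ‖x - ⟪x, e⟫ • e‖ = √(1 - ⟪x, e⟫ ^ 2) := by
  rw [← Real.sqrt_sq (norm_nonneg _), ← real_inner_self_eq_norm_sq, inner_sub_inner_smul_self he,
    real_inner_self_eq_norm_sq, hx]
  ring_nf

theorem real_inner_le_mul_add_sqrt_mul_sqrt (he : ‖e‖ = 1) {x y : E} (hx : ‖x‖ = 1) (hy : ‖y‖ = 1) :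
    ⟪x, y⟫ ≤ ⟪x, e⟫ * ⟪y, e⟫ + √(1 - ⟪x, e⟫ ^ 2) * √(1 - ⟪y, e⟫ ^ 2) := by
  have := real_inner_le_norm (x - ⟪x, e⟫ • e) (y - ⟪y, e⟫ • e)
  rw [inner_sub_inner_smul_self he, norm_sub_inner_smul_self he hx,
    norm_sub_inner_smul_self he hy] at this
  linarith

noncomputable def capBoundaryPoint (e : E) (c : ℝ) (u : E) : E :=
  √(1 - c ^ 2) • (‖u - ⟪u, e⟫ • e‖⁻¹ • (u - ⟪u, e⟫ • e)) + c • e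

theorem inner_capBoundaryPoint (he : ‖e‖ = 1) {u : E} (hu : ‖u‖ = 1) (c : ℝ) :
    ⟪u, capBoundaryPoint e c u⟫ = ⟪u, e⟫ * c + √(1 - ⟪u, e⟫ ^ 2) * √(1 - c ^ 2) := by
  unfold capBoundaryPoint
  set w := u - ⟪u, e⟫ • e
  have huw : ⟪u, w⟫ = ⟪w, w⟫ := by
    rw [inner_sub_inner_smul_self he, inner_sub_right, real_inner_smul_right]
  have huv : ⟪u, ‖w‖⁻¹ • w⟫ = ‖w‖ := by
    rw [real_inner_smul_right, huw, real_inner_self_eq_norm_sq]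
    rcases eq_or_ne ‖w‖ 0 with h | h
    · simp [h]
    · field_simp
  rw [inner_add_right, real_inner_smul_right, huv, real_inner_smul_right,
    norm_sub_inner_smul_self he hu]
  ring

theorem inner_le_inner_capBoundaryPoint (he : ‖e‖ = 1) {u : E} (hu : ‖u‖ = 1) {c : ℝ}
    (huc : ⟪u, e⟫ ≤ c) {x : E} (hx : ‖x‖ = 1) (hxc : c ≤ ⟪x, e⟫) :
    ⟪u, x⟫ ≤ ⟪u, capBoundaryPoint e c u⟫ := by
  have hu₁ : -1 ≤ ⟪u, e⟫ := by
    simpa [hu, he] using neg_le_of_abs_le (abs_real_inner_le_norm u e)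
  have hx₁ : ⟪x, e⟫ ≤ 1 := by simpa [hx, he] using real_inner_le_norm x e
  rw [inner_capBoundaryPoint he hu]
  exact (real_inner_le_mul_add_sqrt_mul_sqrt he hu hx).trans
    (mul_add_sqrt_mul_sqrt_le hu₁ huc hxc hx₁)

end

theorem stmt_5_general
    (cz : ℝ)
    (ez : EuclideanSpace ℝ (Fin 3)) (hez : ez = WithLp.toLp 2 (fun i => if i = 2 then 1 else 0))
    (g : EuclideanSpace ℝ (Fin 3)) (hg : g ≠ 0)
    (ghat : EuclideanSpace ℝ (Fin 3)) (hghat : ghat = ‖g‖⁻¹ • g) :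
    ((cz ≤ ⟪ghat, ez⟫ →
        ∀ x : EuclideanSpace ℝ (Fin 3), ‖x‖ = 1 → cz ≤ ⟪x, ez⟫ → ⟪g, x⟫ ≤ ⟪g, ghat⟫) ∧
     (⟪ghat, ez⟫ < cz → ∀ v : EuclideanSpace ℝ (Fin 3),
        ghat - ⟪ghat, ez⟫ • ez ≠ 0 →
        v = ‖ghat - ⟪ghat, ez⟫ • ez‖⁻¹ • (ghat - ⟪ghat, ez⟫ • ez) →
        ∀ x : EuclideanSpace ℝ (Fin 3), ‖x‖ = 1 → cz ≤ ⟪x, ez⟫ →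
          ⟪g, x⟫ ≤ ⟪g, Real.sqrt (1 - cz^2) • v + cz • ez⟫)) := by
  have hez₁ : ‖ez‖ = 1 := by simp [hez, EuclideanSpace.norm_eq]
  have hg₀ : ‖g‖ ≠ 0 := norm_ne_zero_iff.mpr hg
  have hghat₁ : ‖ghat‖ = 1 := by rw [hghat, norm_smul, norm_inv, norm_norm, inv_mul_cancel₀ hg₀]
  have hscale (y : EuclideanSpace ℝ (Fin 3)) : ⟪g, y⟫ = ‖g‖ * ⟪ghat, y⟫ := by
    rw [hghat, real_inner_smul_left, mul_inv_cancel_left₀ hg₀]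
  refine ⟨fun _ x hx _ => ?_, fun hlt v _ hv x hx hxc => ?_⟩
  · rw [hscale, hscale, real_inner_self_eq_norm_sq, hghat₁, one_pow]
    gcongr
    simpa [hx, hghat₁] using real_inner_le_norm ghat x
  · rw [hscale, hscale, hv]
    gcongr
    exact inner_le_inner_capBoundaryPoint hez₁ hghat₁ hlt.le hx hxc

/-- Frank–Wolfe linear oracle on the spherical cap (Eq. (36)): the closed-form
point maximizes `⟨g, x⟩` over `C_cap = {x : ‖x‖ = 1, xᵀe_z ≥ c_z}`. -/
theorem stmt_5 (θmax : ℝ) (hθ : θmax ∈ Set.Ico 0 (Real.pi / 2))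
    (cz : ℝ) (hcz : cz = Real.cos θmax)
    (ez : EuclideanSpace ℝ (Fin 3)) (hez : ez = WithLp.toLp 2 (fun i => if i = 2 then 1 else 0))
    (g : EuclideanSpace ℝ (Fin 3)) (hg : g ≠ 0)
    (ghat : EuclideanSpace ℝ (Fin 3)) (hghat : ghat = ‖g‖⁻¹ • g) :
    ((cz ≤ ⟪ghat, ez⟫ →
        ∀ x : EuclideanSpace ℝ (Fin 3), ‖x‖ = 1 → cz ≤ ⟪x, ez⟫ → ⟪g, x⟫ ≤ ⟪g, ghat⟫) ∧
     (⟪ghat, ez⟫ < cz → ∀ v : EuclideanSpace ℝ (Fin 3),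
        ghat - ⟪ghat, ez⟫ • ez ≠ 0 →
        v = ‖ghat - ⟪ghat, ez⟫ • ez‖⁻¹ • (ghat - ⟪ghat, ez⟫ • ez) →
        ∀ x : EuclideanSpace ℝ (Fin 3), ‖x‖ = 1 → cz ≤ ⟪x, ez⟫ →
          ⟪g, x⟫ ≤ ⟪g, Real.sqrt (1 - cz^2) • v + cz • ez⟫)) :=
  stmt_5_general cz ez hez g hg ghat hghat
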